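/- Let 𝔤 be the 4-dimensional real Lie algebra with basis X₁, X₂, Y₁, Y₂ whose only nonvanishing brackets among basis elements are [X₁, X₂] = (1/2)(X₂ + Y₂), [X₁, Y₁] = Y₁, [X₁, Y₂] = (1/2)Y₂, and [X₂, Y₂] = Y₁. Let Ω be the alternating bilinear form with Ω(X₁,Y₁) = Ω(X₂,Y₂) = 1 and Ω vanishing on all other pairs of distinct basis elements, and let j be the linear map with jX_i = Y_i and jY_i = −X_i (i = 1, 2). Then Ω is a nondegenerate 2-cocycle, j is a positive compatible complex structure, the span of the image of N^j equals span{X₂, Y₂}, this span is not involutive, its Ω-orthogonal complement equals span{X₁, Y₁}, and that complement is involutive. -/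

import Mathlib

/-!
`Ω` is exact: `Ω(X, Y) = θ([X, Y])` with `θ` the `Y₁`-coordinate, so the cocycle identity is
the Jacobi identity. `Ω(X, jY)` is the standard inner product in the coordinates of the basis,
which gives positivity and nondegeneracy. Everything else is bilinear (or linear) in its
arguments and is therefore checked on basis vectors.
-/

/-- The algebraic Nijenhuis tensor of a linear map `j` on a Lie algebra. -/
def algNijenhuis {𝔤 : Type*} [LieRing 𝔤] [LieAlgebra ℝ 𝔤] (j : 𝔤 →ₗ[ℝ] 𝔤) (X Y : 𝔤) : 𝔤 :=
  ⁅j X, j Y⁆ - j ⁅j X, Y⁆ - j ⁅X, j Y⁆ - ⁅X, Y⁆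

/-- A subspace `W` of a Lie algebra is involutive if `⁅W, W⁆ ⊆ W`. -/
def IsInvolutive {𝔤 : Type*} [LieRing 𝔤] [LieAlgebra ℝ 𝔤] (W : Set 𝔤) : Prop :=
  ∀ u ∈ W, ∀ v ∈ W, ⁅u, v⁆ ∈ W

open Module Submodule Set

section

theorem cocycle_identity_of_exact {R L : Type*} [CommRing R] [LieRing L] [LieAlgebra R L]
    (Ω : L →ₗ[R] L →ₗ[R] R) (θ : L →ₗ[R] R) (h : ∀ X Y, Ω X Y = θ ⁅X, Y⁆) (X Y Z : L) :
    Ω ⁅X, Y⁆ Z + Ω ⁅Y, Z⁆ X + Ω ⁅Z, X⁆ Y = 0 := by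
  have hJ := congrArg θ (lie_jacobi Z X Y)
  rw [map_add, map_add, map_zero] at hJ
  rw [h, h, h, ← lie_skew ⁅X, Y⁆, ← lie_skew ⁅Y, Z⁆, ← lie_skew ⁅Z, X⁆, map_neg, map_neg, map_neg]
  linear_combination -hJ

theorem LinearMap.apply_self_pos_of_toMatrix₂_eq_one {ι R M : Type*} [Fintype ι] [DecidableEq ι]
    [CommRing R] [LinearOrder R] [IsStrictOrderedRing R] [AddCommGroup M] [Module R M]
    (b : Basis ι R M) (B : M →ₗ[R] M →ₗ[R] R) (hB : LinearMap.toMatrix₂ b b B = 1)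
    {x : M} (hx : x ≠ 0) : 0 < B x x := by
  have hsum : B x x = ∑ i, b.repr x i * b.repr x i := by
    rw [← Matrix.toLinearMap₂_toMatrix₂ b b B, hB, Matrix.toLinearMap₂_apply]
    simp [Matrix.one_apply]
  obtain ⟨i, hi⟩ : ∃ i, b.repr x i ≠ 0 := by
    by_contra! h
    exact hx (b.ext_elem fun i => by simp [h i])
  rw [hsum]
  exact Finset.sum_pos' (fun i _ => mul_self_nonneg _) ⟨i, Finset.mem_univ _, mul_self_pos.mpr hi⟩

theorem LinearMap.span_setOf_apply_eq_span_image2_range {ι κ R M N P : Type*} [CommRing R]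
    [AddCommGroup M] [Module R M] [AddCommGroup N] [Module R N] [AddCommGroup P] [Module R P]
    (B : M →ₗ[R] N →ₗ[R] P) (b : Basis ι R M) (c : Basis κ R N) :
    span R {v | ∃ x y, v = B x y} =
      span R (image2 (fun x y => B x y) (Set.range b) (Set.range c)) := by
  rw [← map₂_span_span, b.span_eq, c.span_eq, map₂_eq_span_image2]
  congr 1
  ext v
  simp [eq_comm]

theorem LinearMap.forall_mem_span_apply_eq_zero_iff {R M N : Type*} [CommRing R]
    [AddCommGroup M] [Module R M] [AddCommGroup N] [Module R N]
    (B : M →ₗ[R] N →ₗ[R] R) (s : Set M) (x : N) :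
    (∀ w ∈ span R s, B w x = 0) ↔ ∀ w ∈ s, B w x = 0 :=
  ⟨fun h w hw => h w (subset_span hw),
    fun h _ hw => (span_le (p := LinearMap.ker (B.flip x))).mpr h hw⟩

variable {𝔤 : Type*} [LieRing 𝔤] [LieAlgebra ℝ 𝔤]

def algNijenhuisBilin (j : 𝔤 →ₗ[ℝ] 𝔤) : 𝔤 →ₗ[ℝ] 𝔤 →ₗ[ℝ] 𝔤 :=
  let ad : 𝔤 →ₗ[ℝ] 𝔤 →ₗ[ℝ] 𝔤 := LieAlgebra.ad ℝ 𝔤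
  ad.compl₁₂ j j - (ad.compl₁₂ j LinearMap.id).compr₂ j - (ad.compl₂ j).compr₂ j - ad

theorem algNijenhuisBilin_apply (j : 𝔤 →ₗ[ℝ] 𝔤) (X Y : 𝔤) :
    algNijenhuisBilin j X Y = algNijenhuis j X Y :=
  rfl

theorem isInvolutive_span_of_lie_mem {S : Set 𝔤} (h : ∀ u ∈ S, ∀ v ∈ S, ⁅u, v⁆ ∈ span ℝ S) :
    IsInvolutive (span ℝ S : Set 𝔤) := by
  intro u hu v hv
  have huv := apply_mem_map₂ (LieAlgebra.ad ℝ 𝔤 : 𝔤 →ₗ[ℝ] 𝔤 →ₗ[ℝ] 𝔤) hu hv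
  rw [map₂_span_span] at huv
  refine span_le.mpr ?_ huv
  rintro _ ⟨x, hx, y, hy, rfl⟩
  exact h x hx y hy

end

namespace Example3

variable {𝔤 : Type*} [LieRing 𝔤] [LieAlgebra ℝ 𝔤] {b : Basis (Fin 4) ℝ 𝔤}
  {Ω : 𝔤 →ₗ[ℝ] 𝔤 →ₗ[ℝ] ℝ} {j : 𝔤 →ₗ[ℝ] 𝔤}

/-- `(b 0, b 1, b 2, b 3) = (X₁, X₂, Y₁, Y₂)`. -/
noncomputable def bracket (b : Basis (Fin 4) ℝ 𝔤) (i k : Fin 4) : 𝔤 :=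
  if i = 0 ∧ k = 1 then (1/2 : ℝ) • (b 1 + b 3) else
  if i = 1 ∧ k = 0 then -((1/2 : ℝ) • (b 1 + b 3)) else
  if i = 0 ∧ k = 2 then b 2 else if i = 2 ∧ k = 0 then -(b 2) else
  if i = 0 ∧ k = 3 then (1/2 : ℝ) • b 3 else
  if i = 3 ∧ k = 0 then -((1/2 : ℝ) • b 3) else
  if i = 1 ∧ k = 3 then b 2 else if i = 3 ∧ k = 1 then -(b 2) else 0

def omega : Matrix (Fin 4) (Fin 4) ℝ :=
  !![0,0,1,0; 0,0,0,1; -1,0,0,0; 0,-1,0,0]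

theorem omega_eq_coord_two_lie (hbr : ∀ i k, ⁅b i, b k⁆ = bracket b i k)
    (hΩ : ∀ i k, Ω (b i) (b k) = omega i k) (X Y : 𝔤) :
    Ω X Y = b.coord 2 ⁅X, Y⁆ := by
  have h : Ω = (LieAlgebra.ad ℝ 𝔤 : 𝔤 →ₗ[ℝ] 𝔤 →ₗ[ℝ] 𝔤).compr₂ (b.coord 2) := by
    refine LinearMap.ext_basis b b fun i k => ?_
    fin_cases i <;> fin_cases k <;> simp [hbr, hΩ, bracket, omega]
  rw [h]
  rfl

theorem toMatrix₂_compl₂_eq_one (hΩ : ∀ i k, Ω (b i) (b k) = omega i k)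
    (hj0 : j (b 0) = b 2) (hj1 : j (b 1) = b 3) (hj2 : j (b 2) = -(b 0)) (hj3 : j (b 3) = -(b 1)) :
    LinearMap.toMatrix₂ b b (Ω.compl₂ j) = 1 := by
  ext i k
  fin_cases i <;> fin_cases k <;> simp [hΩ, hj0, hj1, hj2, hj3, omega]

theorem compl₁₂_eq_self (hΩ : ∀ i k, Ω (b i) (b k) = omega i k)
    (hj0 : j (b 0) = b 2) (hj1 : j (b 1) = b 3) (hj2 : j (b 2) = -(b 0)) (hj3 : j (b 3) = -(b 1)) :
    Ω.compl₁₂ j j = Ω := by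
  refine LinearMap.ext_basis b b fun i k => ?_
  fin_cases i <;> fin_cases k <;> simp [hΩ, hj0, hj1, hj2, hj3, omega]

theorem comp_self_eq_neg_id
    (hj0 : j (b 0) = b 2) (hj1 : j (b 1) = b 3) (hj2 : j (b 2) = -(b 0)) (hj3 : j (b 3) = -(b 1)) :
    j ∘ₗ j = -LinearMap.id := by
  refine b.ext fun i => ?_
  fin_cases i <;> simp [hj0, hj1, hj2, hj3]

theorem algNijenhuis_basis_mem_span (hbr : ∀ i k, ⁅b i, b k⁆ = bracket b i k)
    (hj0 : j (b 0) = b 2) (hj1 : j (b 1) = b 3) (hj2 : j (b 2) = -(b 0)) (hj3 : j (b 3) = -(b 1))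
    (i k : Fin 4) :
    algNijenhuis j (b i) (b k) ∈ span ℝ {b 1, b 3} := by
  fin_cases i <;> fin_cases k <;>
    simp [algNijenhuis, hbr, hj0, hj1, hj2, hj3, bracket, mem_span_of_mem]

theorem span_algNijenhuis (hbr : ∀ i k, ⁅b i, b k⁆ = bracket b i k)
    (hj0 : j (b 0) = b 2) (hj1 : j (b 1) = b 3) (hj2 : j (b 2) = -(b 0)) (hj3 : j (b 3) = -(b 1)) :
    span ℝ {v | ∃ X Y, v = algNijenhuis j X Y} = span ℝ {b 1, b 3} := by
  simp_rw [← algNijenhuisBilin_apply]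
  rw [LinearMap.span_setOf_apply_eq_span_image2_range _ b b]
  refine le_antisymm (span_le.mpr ?_) (span_le.mpr ?_)
  · rintro _ ⟨_, ⟨i, rfl⟩, _, ⟨k, rfl⟩, rfl⟩
    exact algNijenhuis_basis_mem_span hbr hj0 hj1 hj2 hj3 i k
  · have h12 : b 1 = (2 : ℝ) • algNijenhuisBilin j (b 1) (b 2) := by
      simp [algNijenhuisBilin_apply, algNijenhuis, hbr, hj1, hj2, hj3, bracket]
    have h23 : b 3 = (2 : ℝ) • algNijenhuisBilin j (b 2) (b 3) := by
      simp [algNijenhuisBilin_apply, algNijenhuis, hbr, hj2, hj3, bracket]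
    rintro _ (rfl | rfl)
    · rw [h12]
      exact smul_mem _ _ (subset_span (mem_image2_of_mem (mem_range_self 1) (mem_range_self 2)))
    · rw [h23]
      exact smul_mem _ _ (subset_span (mem_image2_of_mem (mem_range_self 2) (mem_range_self 3)))

theorem not_isInvolutive_span_one_three (hbr : ∀ i k, ⁅b i, b k⁆ = bracket b i k) :
    ¬ IsInvolutive (span ℝ {b 1, b 3} : Set 𝔤) := by
  intro h
  have hmem := h (b 1) (subset_span (by simp)) (b 3) (subset_span (by simp))
  simp only [hbr, bracket] at hmem
  rw [← image_pair] at hmem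
  exact b.linearIndependent.notMem_span_image (by decide) hmem

theorem mem_span_zero_two_iff (x : 𝔤) :
    x ∈ span ℝ {b 0, b 2} ↔ b.coord 1 x = 0 ∧ b.coord 3 x = 0 := by
  rw [← image_pair, b.mem_span_image, subset_def]
  simp [Fin.forall_fin_succ]

theorem orthogonal_span_one_three (hΩ : ∀ i k, Ω (b i) (b k) = omega i k) :
    {x | ∀ w ∈ span ℝ {b 1, b 3}, Ω w x = 0} = (span ℝ {b 0, b 2} : Set 𝔤) := by
  have hΩ1 : Ω (b 1) = b.coord 3 := b.ext fun i => by fin_cases i <;> simp [hΩ, omega]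
  have hΩ3 : Ω (b 3) = -b.coord 1 := b.ext fun i => by fin_cases i <;> simp [hΩ, omega]
  ext x
  simp [LinearMap.forall_mem_span_apply_eq_zero_iff, hΩ1, hΩ3, mem_span_zero_two_iff, and_comm]

theorem isInvolutive_span_zero_two (hbr : ∀ i k, ⁅b i, b k⁆ = bracket b i k) :
    IsInvolutive (span ℝ {b 0, b 2} : Set 𝔤) := by
  refine isInvolutive_span_of_lie_mem ?_
  rintro u (rfl | rfl) v (rfl | rfl) <;> simp [hbr, bracket, mem_span_of_mem]

end Example3

/-- Example 3.  Basis `b 0 = X₁`, `b 1 = X₂`, `b 2 = Y₁`, `b 3 = Y₂`;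
only nonvanishing brackets `⁅X₁, X₂⁆ = (1/2)(X₂ + Y₂)`, `⁅X₁, Y₁⁆ = Y₁`,
`⁅X₁, Y₂⁆ = (1/2) Y₂`, `⁅X₂, Y₂⁆ = Y₁`; standard `Ω` and `j`.
Then `Ω` is a nondegenerate 2-cocycle, `j` is a positive compatible complex structure,
`Im N^j = span {X₂, Y₂}` is not involutive, and its `Ω`-orthogonal complement
`span {X₁, Y₁}` is involutive. -/
theorem stmt_10 (𝔤 : Type*) [LieRing 𝔤] [LieAlgebra ℝ 𝔤]
    (b : Module.Basis (Fin 4) ℝ 𝔤)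
    (hbr : ∀ i k : Fin 4, ⁅b i, b k⁆ =
      if i = 0 ∧ k = 1 then (1/2 : ℝ) • (b 1 + b 3) else
      if i = 1 ∧ k = 0 then -((1/2 : ℝ) • (b 1 + b 3)) else
      if i = 0 ∧ k = 2 then b 2 else if i = 2 ∧ k = 0 then -(b 2) else
      if i = 0 ∧ k = 3 then (1/2 : ℝ) • b 3 else
      if i = 3 ∧ k = 0 then -((1/2 : ℝ) • b 3) else
      if i = 1 ∧ k = 3 then b 2 else if i = 3 ∧ k = 1 then -(b 2) else 0)
    (Ω : 𝔤 →ₗ[ℝ] 𝔤 →ₗ[ℝ] ℝ)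
    (hΩ : ∀ i k : Fin 4, Ω (b i) (b k) =
      !![0,0,1,0; 0,0,0,1; -1,0,0,0; 0,-1,0,0] i k)
    (j : 𝔤 →ₗ[ℝ] 𝔤)
    (hj0 : j (b 0) = b 2) (hj1 : j (b 1) = b 3)
    (hj2 : j (b 2) = -(b 0)) (hj3 : j (b 3) = -(b 1)) :
    (∀ X : 𝔤, (∀ Y : 𝔤, Ω X Y = 0) → X = 0) ∧
    (∀ X Y Z : 𝔤, Ω ⁅X, Y⁆ Z + Ω ⁅Y, Z⁆ X + Ω ⁅Z, X⁆ Y = 0) ∧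
    (∀ X : 𝔤, j (j X) = -X) ∧
    (∀ X Y : 𝔤, Ω (j X) (j Y) = Ω X Y) ∧
    (∀ X : 𝔤, X ≠ 0 → 0 < Ω X (j X)) ∧
    Submodule.span ℝ {v : 𝔤 | ∃ X Y : 𝔤, v = algNijenhuis j X Y} =
      Submodule.span ℝ {b 1, b 3} ∧
    ¬ IsInvolutive (↑(Submodule.span ℝ ({b 1, b 3} : Set 𝔤)) : Set 𝔤) ∧
    {x : 𝔤 | ∀ w ∈ Submodule.span ℝ ({b 1, b 3} : Set 𝔤), Ω w x = 0} =
      (↑(Submodule.span ℝ ({b 0, b 2} : Set 𝔤)) : Set 𝔤) ∧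
    IsInvolutive (↑(Submodule.span ℝ ({b 0, b 2} : Set 𝔤)) : Set 𝔤) := by
  have hpos : ∀ X : 𝔤, X ≠ 0 → 0 < Ω X (j X) := fun X hX =>
    LinearMap.apply_self_pos_of_toMatrix₂_eq_one b (Ω.compl₂ j)
      (Example3.toMatrix₂_compl₂_eq_one hΩ hj0 hj1 hj2 hj3) hX
  refine ⟨fun X hX => ?_,
    cocycle_identity_of_exact Ω (b.coord 2) (Example3.omega_eq_coord_two_lie hbr hΩ),
    LinearMap.congr_fun (Example3.comp_self_eq_neg_id hj0 hj1 hj2 hj3),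
    LinearMap.congr_fun₂ (Example3.compl₁₂_eq_self hΩ hj0 hj1 hj2 hj3), hpos,
    Example3.span_algNijenhuis hbr hj0 hj1 hj2 hj3, Example3.not_isInvolutive_span_one_three hbr,
    Example3.orthogonal_span_one_three hΩ, Example3.isInvolutive_span_zero_two hbr⟩
  by_contra hne
  exact (hpos X hne).ne' (hX _)
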